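/- Let β > 0, 0 ≤ p ≤ 1/2 and 0 < α₂ < α₁. Then the likelihood ratio x ↦ f(x; α₁, β, p) / f(x; α₂, β, p) of the RTUOMG densities is nonincreasing on the interval (0,1); that is, the RTUOMG(α₁, β, p) distribution is smaller than the RTUOMG(α₂, β, p) distribution in the likelihood ratio order. -/

import Mathlib

/-- The omega function `ω(x) = ((1 + x^β)/(1 - x^β))^{-α}` on `(0,1)`. -/
noncomputable def omegaFn (α β x : ℝ) : ℝ := ((1 + x ^ β) / (1 - x ^ β)) ^ (-α)

/-- The RTUOMG cumulative distribution function
`F(x; α, β, p) = 1 - ω(x) + p ω(x) log ω(x)`. -/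
noncomputable def rtuomgCDF (α β p x : ℝ) : ℝ :=
  1 - omegaFn α β x + p * omegaFn α β x * Real.log (omegaFn α β x)

/-- The RTUOMG probability density function
`f(x; α, β, p) = (2αβ x^{β-1}/(1 - x^{2β})) ω(x) (1 - p - p log ω(x))`. -/
noncomputable def rtuomgPDF (α β p x : ℝ) : ℝ :=
  2 * α * β * x ^ (β - 1) / (1 - x ^ (2 * β)) * omegaFn α β x *
    (1 - p - p * Real.log (omegaFn α β x))

/-!
With `t = log((1 + x^β)/(1 - x^β))`, which increases from `0` on `(0,1)`, one has `ω = e^{-α t}`,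
so the likelihood ratio is `(α₁/α₂) e^{-(α₁-α₂) t} (1 - p + p α₁ t)/(1 - p + p α₂ t)` and it suffices
that this decreases in `t ≥ 0`. For `t ≤ s` the rational factor grows by a factor of at most
`1 + p (α₁ - α₂)(s - t)/(1 - p)`, and `p ≤ 1/2` makes this at most `1 + (α₁ - α₂)(s - t)`,
which `e^{(α₁-α₂)(s-t)}` dominates.
-/

open Real Set

/-- The exponent `t` with `ω(x) = e^{-α t}`. -/
noncomputable def omegaExponent (β x : ℝ) : ℝ := log ((1 + x ^ β) / (1 - x ^ β))

lemma antitoneOn_exp_mul_div_of_sub_le {δ A a b : ℝ} (hA : 0 < A) (hb : 0 ≤ b) (hba : b ≤ a)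
    (hab : a - b ≤ δ * A) :
    AntitoneOn (fun t => exp (-(δ * t)) * (A + a * t) / (A + b * t)) (Ici 0) := by
  intro t ht s hs hts
  have ht : 0 ≤ t := ht
  have hs : 0 ≤ s := hs
  have hAt : A ≤ A + a * t := le_add_of_nonneg_right (mul_nonneg (hb.trans hba) ht)
  have hAs : A ≤ A + b * s := le_add_of_nonneg_right (mul_nonneg hb hs)
  have hexp : exp (-(δ * t)) = exp (-(δ * s)) * exp (δ * (s - t)) := by
    rw [← exp_add]; ring_nf
  have hδ : 0 ≤ δ := nonneg_of_mul_nonneg_left ((sub_nonneg.2 hba).trans hab) hA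
  have hst : 0 ≤ s - t := sub_nonneg.2 hts
  have hgrowth : (A + a * s) * (A + b * t) ≤ (A + a * t) * (A + b * s) * (1 + δ * (s - t)) := by
    have key : A * (a - b) ≤ δ * ((A + a * t) * (A + b * s)) := calc
      A * (a - b) ≤ A * (δ * A) := mul_le_mul_of_nonneg_left hab hA.le
      _ = δ * (A * A) := by ring
      _ ≤ δ * ((A + a * t) * (A + b * s)) :=
        mul_le_mul_of_nonneg_left (mul_le_mul hAt hAs hA.le (by linarith)) hδ
    nlinarith [mul_le_mul_of_nonneg_right key hst]
  have hAbt : 0 < A + b * t := add_pos_of_pos_of_nonneg hA (mul_nonneg hb ht)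
  rw [div_le_div_iff₀ (hA.trans_le hAs) hAbt, hexp]
  calc exp (-(δ * s)) * (A + a * s) * (A + b * t)
      = exp (-(δ * s)) * ((A + a * s) * (A + b * t)) := by ring
    _ ≤ exp (-(δ * s)) * ((A + a * t) * (A + b * s) * (1 + δ * (s - t))) := by gcongr
    _ ≤ exp (-(δ * s)) * ((A + a * t) * (A + b * s) * exp (δ * (s - t))) := by
        gcongr
        · exact mul_nonneg (hA.le.trans hAt) (hA.le.trans hAs)
        · linarith [add_one_le_exp (δ * (s - t))]
    _ = exp (-(δ * s)) * exp (δ * (s - t)) * (A + a * t) * (A + b * s) := by ring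

lemma rpow_mem_Ico_zero_one {β x : ℝ} (hβ : 0 < β) (hx : x ∈ Ico 0 1) : x ^ β ∈ Ico 0 1 :=
  ⟨rpow_nonneg hx.1 β, rpow_lt_one hx.1 hx.2 hβ⟩

lemma omegaExponent_zero {β : ℝ} (hβ : 0 < β) : omegaExponent β 0 = 0 := by
  simp [omegaExponent, zero_rpow hβ.ne']

lemma monotoneOn_omegaExponent {β : ℝ} (hβ : 0 < β) : MonotoneOn (omegaExponent β) (Ico 0 1) := by
  intro x hx y hy hxy
  obtain ⟨hu0, hu1⟩ := rpow_mem_Ico_zero_one hβ hx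
  obtain ⟨hv0, hv1⟩ := rpow_mem_Ico_zero_one hβ hy
  have huv : x ^ β ≤ y ^ β := rpow_le_rpow hx.1 hxy hβ.le
  apply log_le_log (div_pos (by linarith) (by linarith))
  rw [div_le_div_iff₀ (by linarith) (by linarith)]
  nlinarith

lemma omegaExponent_nonneg {β x : ℝ} (hβ : 0 < β) (hx : x ∈ Ico 0 1) : 0 ≤ omegaExponent β x :=
  omegaExponent_zero hβ ▸ monotoneOn_omegaExponent hβ ⟨le_rfl, one_pos⟩ hx hx.1

lemma omegaFn_eq_exp {α β x : ℝ} (hβ : 0 < β) (hx : x ∈ Ico 0 1) :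
    omegaFn α β x = exp (-(α * omegaExponent β x)) := by
  obtain ⟨hu0, hu1⟩ := rpow_mem_Ico_zero_one hβ hx
  rw [omegaFn, rpow_def_of_pos (div_pos (by linarith) (by linarith)), omegaExponent, mul_comm,
    neg_mul]

lemma rtuomgPDF_eq {α β p x : ℝ} (hβ : 0 < β) (hx : x ∈ Ico 0 1) :
    rtuomgPDF α β p x = 2 * β * x ^ (β - 1) / (1 - x ^ (2 * β)) *
      (α * exp (-(α * omegaExponent β x)) * (1 - p + p * α * omegaExponent β x)) := by
  rw [rtuomgPDF, omegaFn_eq_exp hβ hx, log_exp]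
  ring

lemma rtuomgPDF_div_rtuomgPDF {α₁ α₂ β p x : ℝ} (hβ : 0 < β) (hx : x ∈ Ioo 0 1) :
    rtuomgPDF α₁ β p x / rtuomgPDF α₂ β p x =
      α₁ / α₂ * (exp (-((α₁ - α₂) * omegaExponent β x)) * (1 - p + p * α₁ * omegaExponent β x) /
        (1 - p + p * α₂ * omegaExponent β x)) := by
  have hprefactor : 2 * β * x ^ (β - 1) / (1 - x ^ (2 * β)) ≠ 0 := by
    have : x ^ (2 * β) < 1 := rpow_lt_one hx.1.le hx.2 (by positivity)
    have : 0 < x ^ (β - 1) := rpow_pos_of_pos hx.1 _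
    exact (div_pos (by positivity) (by linarith)).ne'
  rw [rtuomgPDF_eq hβ (Ioo_subset_Ico_self hx), rtuomgPDF_eq hβ (Ioo_subset_Ico_self hx),
    mul_div_mul_left _ _ hprefactor, mul_div_mul_comm, mul_div_mul_comm, ← exp_sub]
  ring_nf

/-- **Likelihood ratio ordering in the shape parameter `α`.**
For `β > 0`, `0 ≤ p ≤ 1/2` and `0 < α₂ < α₁`, the likelihood ratio
`x ↦ f(x; α₁, β, p) / f(x; α₂, β, p)` is nonincreasing on `(0,1)`;
i.e. RTUOMG(α₁, β, p) is smaller than RTUOMG(α₂, β, p) in the likelihood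
ratio order. -/
theorem rtuomg_likelihood_ratio_order (β p α₁ α₂ : ℝ) (hβ : 0 < β)
    (hp0 : 0 ≤ p) (hp1 : p ≤ 1 / 2) (hα₂ : 0 < α₂) (hα : α₂ < α₁) :
    AntitoneOn (fun x => rtuomgPDF α₁ β p x / rtuomgPDF α₂ β p x)
      (Set.Ioo (0:ℝ) 1) := by
  have hfactor := antitoneOn_exp_mul_div_of_sub_le (δ := α₁ - α₂) (A := 1 - p) (a := p * α₁)
    (b := p * α₂) (by linarith) (by positivity) (by nlinarith)
    (by nlinarith [mul_nonneg (sub_nonneg.2 hα.le) (by linarith : (0 : ℝ) ≤ 1 - 2 * p)])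
  have hcomp := hfactor.comp_MonotoneOn ((monotoneOn_omegaExponent hβ).mono Ioo_subset_Ico_self)
    fun x hx => omegaExponent_nonneg hβ (Ioo_subset_Ico_self hx)
  have hcoeff : 0 ≤ α₁ / α₂ := div_nonneg (hα₂.trans hα).le hα₂.le
  exact AntitoneOn.congr (fun x hx y hy hxy => mul_le_mul_of_nonneg_left (hcomp hx hy hxy) hcoeff)
    fun x hx => (rtuomgPDF_div_rtuomgPDF hβ hx).symm
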